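/- Let Φ : (M₁,Ω₁) → (M₂,Ω₂) be a state-preserving unital completely positive Markov map admitting an adjoint Φ^♯, and assume the contraction U_Φ satisfies J₂ U_Φ = U_Φ J₁ (where Jᵢ are the modular conjugations). Then with Λ_Φ, τ_Φ as in the Stinespring construction and Φ'(Y) = J₁ Φ^♯(J₂YJ₂)J₁, one has Λ_Φ* τ_Φ(Y) Λ_Φ = Φ'(Y) for every Y ∈ M₂'. -/

import Mathlib

/-! Both operators are determined by their matrix elements between the vectors `A Ω₁`, `C Ω₁`,
`A, C ∈ M₁`, since `Ω₁` is cyclic. On the Stinespring side the matrix element is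
`⟪Ω₂, Φ(A* C) Y Ω₂⟫ = ⟪U_Φ C* A Ω₁, Y Ω₂⟫`, because completely positive maps are `*`-preserving.
On the other side, `J₁ C J₁ ∈ M₁'` commutes with `Φ^♯(J₂ Y J₂)`, which moves `C` to the left, and
`Φ^♯(B) Ω₁ = U_Φ* B Ω₂` together with `U_Φ* J₂ = J₁ U_Φ*` turns `J₁ Φ^♯(J₂ Y J₂) Ω₁` into
`U_Φ* Y Ω₂`. -/

open scoped InnerProductSpace ComplexOrder
open ContinuousLinearMap (adjoint)

noncomputable section

/-- Complete positivity of a map `Φ` relative to a subset `M` of operators: matrix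
amplifications preserve positivity, expressed on vectors. -/
def IsCP {H K : Type*} [NormedAddCommGroup H] [InnerProductSpace ℂ H]
    [NormedAddCommGroup K] [InnerProductSpace ℂ K]
    (M : Set (H →L[ℂ] H)) (Φ : (H →L[ℂ] H) →ₗ[ℂ] (K →L[ℂ] K)) : Prop :=
  ∀ (n : ℕ) (B : Fin n → Fin n → (H →L[ℂ] H)),
    (∀ i j, B i j ∈ M) →
    (∀ v : Fin n → H, 0 ≤ ∑ i, ∑ j, ⟪v i, (B i j) (v j)⟫_ℂ) →
    ∀ w : Fin n → K, 0 ≤ ∑ i, ∑ j, ⟪w i, (Φ (B i j)) (w j)⟫_ℂ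

/-- The Stinespring space `L_Φ` of a (completely positive) map `Φ`, defined on the
subset `M` of `B(H)` and taking values in `B(K)`: the separation-completion of the
algebraic tensor product `M ⊗ K` with respect to the semi-inner product
`⟨A ⊗ h, X ⊗ k⟩ = ⟨h, Φ(A* X) k⟩`, presented abstractly as a Hilbert space `L`
together with the bilinear map `emb A h = [A ⊗ h]` having dense span. -/
structure StinespringData {H K : Type*}
    [NormedAddCommGroup H] [InnerProductSpace ℂ H] [CompleteSpace H]
    [NormedAddCommGroup K] [InnerProductSpace ℂ K] [CompleteSpace K]
    (M : Set (H →L[ℂ] H)) (Φ : (H →L[ℂ] H) →ₗ[ℂ] (K →L[ℂ] K))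
    (L : Type*) [NormedAddCommGroup L] [InnerProductSpace ℂ L] [CompleteSpace L] where
  emb : (H →L[ℂ] H) →ₗ[ℂ] K →ₗ[ℂ] L
  inner_emb : ∀ A X : H →L[ℂ] H, A ∈ M → X ∈ M → ∀ h k : K,
    ⟪emb A h, emb X k⟫_ℂ = ⟪h, Φ (star A * X) k⟫_ℂ
  dense_span :
    (Submodule.span ℂ {x : L | ∃ A ∈ M, ∃ h : K, x = emb A h}).topologicalClosure = ⊤
/-- `Ω` is a cyclic vector for the set of operators `M`. -/
def IsCyclicVec {H : Type*} [NormedAddCommGroup H] [InnerProductSpace ℂ H]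
    (M : Set (H →L[ℂ] H)) (Ω : H) : Prop :=
  (Submodule.span ℂ {x : H | ∃ A ∈ M, x = A Ω}).topologicalClosure = ⊤

/-- `Ω` is a separating vector for the set of operators `M`. -/
def IsSeparatingVec {H : Type*} [NormedAddCommGroup H] [InnerProductSpace ℂ H]
    (M : Set (H →L[ℂ] H)) (Ω : H) : Prop :=
  ∀ A ∈ M, A Ω = 0 → A = 0

/-- `Φ` preserves the vector states given by `Ω₁`, `Ω₂` on the algebra `M`. -/
def IsStatePreserving {H K : Type*} [NormedAddCommGroup H] [InnerProductSpace ℂ H]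
    [NormedAddCommGroup K] [InnerProductSpace ℂ K]
    (M : Set (H →L[ℂ] H)) (Ω₁ : H) (Ω₂ : K)
    (Φ : (H →L[ℂ] H) →ₗ[ℂ] (K →L[ℂ] K)) : Prop :=
  ∀ A ∈ M, ⟪Ω₂, Φ A Ω₂⟫_ℂ = ⟪Ω₁, A Ω₁⟫_ℂ
/-- The modular conjugation of a von Neumann algebra `M` in standard form with cyclic and
separating vector `Ω`: an anti-unitary involution `J` fixing `Ω`, together with the induced
conjugation `conj A = J A J` on operators, which exchanges `M` with its commutant `M'` and
acts as the identity on the natural positive cone. -/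
structure ModularConjugation {H : Type*}
    [NormedAddCommGroup H] [InnerProductSpace ℂ H] [CompleteSpace H]
    (M : VonNeumannAlgebra H) (Ω : H) where
  J : H → H
  conj : (H →L[ℂ] H) → (H →L[ℂ] H)
  map_add : ∀ x y, J (x + y) = J x + J y
  map_smul : ∀ (a : ℂ) (x : H), J (a • x) = (starRingEnd ℂ a) • J x
  invol : ∀ x, J (J x) = x
  inner_map : ∀ x y, ⟪J x, J y⟫_ℂ = ⟪y, x⟫_ℂ
  fixΩ : J Ω = Ω
  conj_apply : ∀ (A : H →L[ℂ] H) (x : H), conj A x = J (A (J x))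
  conj_mem : ∀ A ∈ M, conj A ∈ M.commutant
  conj_mem' : ∀ Y ∈ M.commutant, conj Y ∈ M
  fix_cone : ∀ A ∈ M, J ((A * conj A) Ω) = (A * conj A) Ω

open ComplexStarModule

section CompletelyPositive

variable {H K : Type*} [NormedAddCommGroup H] [InnerProductSpace ℂ H]
  [NormedAddCommGroup K] [InnerProductSpace ℂ K]

lemma IsCP.isPositive_map {M : Set (H →L[ℂ] H)} {Ψ : (H →L[ℂ] H) →ₗ[ℂ] (K →L[ℂ] K)}
    (hΨ : IsCP M Ψ) {P : H →L[ℂ] H} (hPM : P ∈ M) (hP : P.IsPositive) : (Ψ P).IsPositive := by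
  have hpos : ∀ w : K, 0 ≤ ⟪w, Ψ P w⟫_ℂ := fun w => by
    simpa using hΨ 1 (fun _ _ => P) (fun _ _ => hPM)
      (fun v => by simpa using hP.inner_nonneg_right (v 0)) (fun _ => w)
  refine (ContinuousLinearMap.isPositive_iff_complex _).mpr fun w => ?_
  obtain ⟨r, hr, hrw⟩ := RCLike.nonneg_iff_exists_ofReal.mp (hpos w)
  rw [← inner_conj_symm, ← hrw]
  simpa using hr

variable [CompleteSpace H] [CompleteSpace K]

/-- `Ψ S = ‖S‖ Ψ(1) - Ψ(‖S‖ - S)` is a difference of positive operators. -/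
lemma IsCP.isSelfAdjoint_map {N : VonNeumannAlgebra H} {Ψ : (H →L[ℂ] H) →ₗ[ℂ] (K →L[ℂ] K)}
    (hΨ : IsCP (N : Set (H →L[ℂ] H)) Ψ) {S : H →L[ℂ] H} (hSN : S ∈ N) (hS : IsSelfAdjoint S) :
    IsSelfAdjoint (Ψ S) := by
  set P : H →L[ℂ] H := (‖S‖ : ℂ) • 1 - S
  have hP : P.IsPositive := by
    have := hS.le_algebraMap_norm_self
    rwa [ContinuousLinearMap.le_def, Algebra.algebraMap_eq_smul_one, ← Complex.coe_smul] at this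
  have hPN : P ∈ N := sub_mem (N.toStarSubalgebra.smul_mem (one_mem _) _) hSN
  have hΨS : Ψ S = (‖S‖ : ℂ) • Ψ 1 - Ψ P := by
    rw [map_sub, map_smul, sub_sub_cancel]
  have hΨ1 := (hΨ.isPositive_map (one_mem N) ContinuousLinearMap.isPositive_one).isSelfAdjoint
  have hΨP := (hΨ.isPositive_map hPN hP).isSelfAdjoint
  rw [hΨS]
  exact (IsSelfAdjoint.smul (Complex.conj_ofReal _) hΨ1).sub hΨP

lemma IsCP.map_star {N : VonNeumannAlgebra H} {Ψ : (H →L[ℂ] H) →ₗ[ℂ] (K →L[ℂ] K)}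
    (hΨ : IsCP (N : Set (H →L[ℂ] H)) Ψ) {B : H →L[ℂ] H} (hB : B ∈ N) :
    Ψ (star B) = star (Ψ B) := by
  have hre : (ℜ B : H →L[ℂ] H) ∈ N := by
    rw [realPart_apply_coe, ← Complex.coe_smul]
    exact N.toStarSubalgebra.smul_mem (add_mem hB (star_mem hB)) _
  have him : (ℑ B : H →L[ℂ] H) ∈ N := by
    rw [imaginaryPart_apply_coe, ← Complex.coe_smul]
    exact N.toStarSubalgebra.smul_mem (N.toStarSubalgebra.smul_mem (sub_mem hB (star_mem hB)) _) _
  conv_lhs => rw [← realPart_add_I_smul_imaginaryPart B]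
  conv_rhs => rw [← realPart_add_I_smul_imaginaryPart B]
  simp [(hΨ.isSelfAdjoint_map hre (ℜ B).2).star_eq, (hΨ.isSelfAdjoint_map him (ℑ B).2).star_eq,
    (ℜ B).2.star_eq, (ℑ B).2.star_eq]

end CompletelyPositive

section Cyclic

variable {H K : Type*} [NormedAddCommGroup H] [InnerProductSpace ℂ H]
  [NormedAddCommGroup K] [InnerProductSpace ℂ K] {M : Set (H →L[ℂ] H)} {Ω : H}

lemma IsCyclicVec.dense (hΩ : IsCyclicVec M Ω) :
    Dense (Submodule.span ℂ {x : H | ∃ A ∈ M, x = A Ω} : Set H) :=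
  Submodule.dense_iff_topologicalClosure_eq_top.mpr hΩ

lemma IsCyclicVec.eq_of_inner (hΩ : IsCyclicVec M Ω) {x y : H}
    (h : ∀ A ∈ M, ⟪A Ω, x⟫_ℂ = ⟪A Ω, y⟫_ℂ) : x = y := by
  refine hΩ.dense.eq_of_inner_right ℂ fun v hv => ?_
  induction hv using Submodule.span_induction with
  | mem _ hv => obtain ⟨A, hA, rfl⟩ := hv; exact h A hA
  | zero => simp
  | add _ _ _ _ hu hv => simp [inner_add_left, hu, hv]
  | smul _ _ _ hv => simp [inner_smul_left, hv]

lemma IsCyclicVec.ext (hΩ : IsCyclicVec M Ω) {T T' : H →L[ℂ] K}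
    (h : ∀ A ∈ M, T (A Ω) = T' (A Ω)) : T = T' :=
  ContinuousLinearMap.ext_on hΩ.dense (by rintro _ ⟨A, hA, rfl⟩; exact h A hA)

end Cyclic

namespace ModularConjugation

variable {H : Type*} [NormedAddCommGroup H] [InnerProductSpace ℂ H] [CompleteSpace H]
  {M : VonNeumannAlgebra H} {Ω : H} (J : ModularConjugation M Ω)

lemma inner_apply_right (x y : H) : ⟪x, J.J y⟫_ℂ = ⟪y, J.J x⟫_ℂ := by
  rw [← J.inner_map, J.invol]

lemma J_conj_apply_self (Y : H →L[ℂ] H) : J.J (J.conj Y Ω) = Y Ω := by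
  rw [J.conj_apply, J.fixΩ, J.invol]

/-- `J C J ∈ M'` commutes with `X`, and `J C J Ω = J C Ω`. -/
lemma conj_apply_apply_self {X C : H →L[ℂ] H} (hX : X ∈ M) (hC : C ∈ M) :
    J.conj X (C Ω) = C (J.J (X Ω)) := by
  have hcomm : X (J.conj C Ω) = J.conj C (X Ω) := DFunLike.congr_fun
    (VonNeumannAlgebra.mem_commutant_iff.mp (J.conj_mem C hC) X hX) Ω
  rw [J.conj_apply, J.conj_apply, J.fixΩ] at hcomm
  rw [J.conj_apply, hcomm, J.invol]

end ModularConjugation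

section Adjoint

variable {H₁ H₂ : Type*} [NormedAddCommGroup H₁] [InnerProductSpace ℂ H₁] [CompleteSpace H₁]
  [NormedAddCommGroup H₂] [InnerProductSpace ℂ H₂] [CompleteSpace H₂]

lemma adjoint_apply_J_eq {M₁ : VonNeumannAlgebra H₁} {M₂ : VonNeumannAlgebra H₂}
    {Ω₁ : H₁} {Ω₂ : H₂} (J₁ : ModularConjugation M₁ Ω₁) (J₂ : ModularConjugation M₂ Ω₂)
    {U : H₁ →L[ℂ] H₂} (hJU : ∀ x, J₂.J (U x) = U (J₁.J x)) (w : H₂) :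
    adjoint U (J₂.J w) = J₁.J (adjoint U w) :=
  ext_inner_left ℂ fun v => by
    rw [ContinuousLinearMap.adjoint_inner_right, J₂.inner_apply_right, hJU,
      ← ContinuousLinearMap.adjoint_inner_left, J₁.inner_apply_right]

lemma apply_cyclic_eq_adjoint_apply {M₁ : Set (H₁ →L[ℂ] H₁)} {M₂ : VonNeumannAlgebra H₂}
    {Ω₁ : H₁} {Ω₂ : H₂} (hΩ₁ : IsCyclicVec M₁ Ω₁)
    {Φ : (H₁ →L[ℂ] H₁) →ₗ[ℂ] (H₂ →L[ℂ] H₂)} {Φs : (H₂ →L[ℂ] H₂) →ₗ[ℂ] (H₁ →L[ℂ] H₁)}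
    (hΦs : ∀ B ∈ M₂, Φs (star B) = star (Φs B))
    (hadj : ∀ A ∈ M₁, ∀ B ∈ M₂, ⟪Ω₂, B (Φ A Ω₂)⟫_ℂ = ⟪Ω₁, Φs B (A Ω₁)⟫_ℂ)
    {U : H₁ →L[ℂ] H₂} (hU : ∀ A ∈ M₁, U (A Ω₁) = Φ A Ω₂) {B : H₂ →L[ℂ] H₂} (hB : B ∈ M₂) :
    Φs B Ω₁ = adjoint U (B Ω₂) :=
  hΩ₁.eq_of_inner fun A hA => by
    rw [← ContinuousLinearMap.adjoint_inner_left, ← ContinuousLinearMap.star_eq_adjoint,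
      ← hΦs B hB, ← inner_conj_symm, ← hadj A hA _ (star_mem hB), inner_conj_symm,
      ContinuousLinearMap.star_eq_adjoint, ContinuousLinearMap.adjoint_inner_left, ← hU A hA,
      ContinuousLinearMap.adjoint_inner_right]

end Adjoint

lemma StinespringData.inner_adjoint_comp_comp_apply {H K L : Type*}
    [NormedAddCommGroup H] [InnerProductSpace ℂ H] [CompleteSpace H]
    [NormedAddCommGroup K] [InnerProductSpace ℂ K] [CompleteSpace K]
    [NormedAddCommGroup L] [InnerProductSpace ℂ L] [CompleteSpace L]
    {M : Set (H →L[ℂ] H)} {Φ : (H →L[ℂ] H) →ₗ[ℂ] (K →L[ℂ] K)} (S : StinespringData M Φ L)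
    {Ω : H} {Ω₂ : K} {Λ : H →L[ℂ] L} (hΛ : ∀ A ∈ M, Λ (A Ω) = S.emb A Ω₂)
    {T : L →L[ℂ] L} {Y : K →L[ℂ] K} (hT : ∀ A ∈ M, ∀ h : K, T (S.emb A h) = S.emb A (Y h))
    {A C : H →L[ℂ] H} (hA : A ∈ M) (hC : C ∈ M) :
    ⟪A Ω, (adjoint Λ ∘L T ∘L Λ) (C Ω)⟫_ℂ = ⟪Ω₂, Φ (star A * C) (Y Ω₂)⟫_ℂ := by
  rw [ContinuousLinearMap.comp_apply, ContinuousLinearMap.adjoint_inner_right,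
    ContinuousLinearMap.comp_apply, hΛ A hA, hΛ C hC, hT C hC, S.inner_emb A C hA hC]

theorem stmt10_general
    {H₁ H₂ : Type*} [NormedAddCommGroup H₁] [InnerProductSpace ℂ H₁] [CompleteSpace H₁]
    [NormedAddCommGroup H₂] [InnerProductSpace ℂ H₂] [CompleteSpace H₂]
    (M₁ : VonNeumannAlgebra H₁) (M₂ : VonNeumannAlgebra H₂) (Ω₁ : H₁) (Ω₂ : H₂)
    (hcyc₁ : IsCyclicVec (M₁ : Set (H₁ →L[ℂ] H₁)) Ω₁)
    (J₁ : ModularConjugation M₁ Ω₁) (J₂ : ModularConjugation M₂ Ω₂)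
    (Φ : (H₁ →L[ℂ] H₁) →ₗ[ℂ] (H₂ →L[ℂ] H₂))
    (hCP : IsCP (M₁ : Set (H₁ →L[ℂ] H₁)) Φ)
    (Φs : (H₂ →L[ℂ] H₂) →ₗ[ℂ] (H₁ →L[ℂ] H₁))
    (hmems : ∀ B ∈ M₂, Φs B ∈ M₁)
    (hCPs : IsCP (M₂ : Set (H₂ →L[ℂ] H₂)) Φs)
    (hadj : ∀ A ∈ M₁, ∀ B ∈ M₂, ⟪Ω₂, B (Φ A Ω₂)⟫_ℂ = ⟪Ω₁, Φs B (A Ω₁)⟫_ℂ)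
    (U : H₁ →L[ℂ] H₂) (hU : ∀ A ∈ M₁, U (A Ω₁) = Φ A Ω₂)
    (hJU : ∀ x : H₁, J₂.J (U x) = U (J₁.J x))
    (L : Type*) [NormedAddCommGroup L] [InnerProductSpace ℂ L] [CompleteSpace L]
    (S : StinespringData (M₁ : Set (H₁ →L[ℂ] H₁)) Φ L)
    (τ : (H₂ →L[ℂ] H₂) → (L →L[ℂ] L))
    (hτ : ∀ Y ∈ M₂.commutant, ∀ A ∈ M₁, ∀ h : H₂, τ Y (S.emb A h) = S.emb A (Y h))
    (Λ : H₁ →L[ℂ] L) (hΛ : ∀ A ∈ M₁, Λ (A Ω₁) = S.emb A Ω₂) :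
    ∀ Y ∈ M₂.commutant,
      adjoint Λ ∘L τ Y ∘L Λ = J₁.conj (Φs (J₂.conj Y)) := by
  intro Y hY
  have hY' : J₂.conj Y ∈ M₂ := J₂.conj_mem' Y hY
  have hUY : adjoint U (Y Ω₂) = J₁.J (Φs (J₂.conj Y) Ω₁) := by
    rw [apply_cyclic_eq_adjoint_apply hcyc₁ (fun _ => hCPs.map_star) hadj hU hY',
      ← adjoint_apply_J_eq J₁ J₂ hJU, J₂.J_conj_apply_self]
  refine hcyc₁.ext fun C hC => hcyc₁.eq_of_inner fun A hA => ?_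
  have hAC : star A * C ∈ M₁ := mul_mem (star_mem hA) hC
  have hCA : star C * A ∈ M₁ := mul_mem (star_mem hC) hA
  calc ⟪A Ω₁, (adjoint Λ ∘L τ Y ∘L Λ) (C Ω₁)⟫_ℂ
      = ⟪Ω₂, Φ (star A * C) (Y Ω₂)⟫_ℂ := S.inner_adjoint_comp_comp_apply hΛ (hτ Y hY) hA hC
    _ = ⟪Φ (star C * A) Ω₂, Y Ω₂⟫_ℂ := by
      rw [← ContinuousLinearMap.adjoint_inner_left, ← ContinuousLinearMap.star_eq_adjoint,
        ← hCP.map_star hAC, star_mul, star_star]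
    _ = ⟪A Ω₁, C (adjoint U (Y Ω₂))⟫_ℂ := by
      rw [← ContinuousLinearMap.adjoint_inner_left C, ContinuousLinearMap.adjoint_inner_right U,
        ← ContinuousLinearMap.star_eq_adjoint, ← hU _ hCA]
      rfl
    _ = ⟪A Ω₁, J₁.conj (Φs (J₂.conj Y)) (C Ω₁)⟫_ℂ := by
      rw [hUY, J₁.conj_apply_apply_self (hmems _ hY') hC]

/-- For a Markov map `Φ` with adjoint `Φ^♯` and `J₂ U_Φ = U_Φ J₁`,
one has `Λ_Φ* τ_Φ(Y) Λ_Φ = Φ'(Y) = J₁ Φ^♯(J₂ Y J₂) J₁` for every `Y ∈ M₂'`. -/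
theorem stmt10
    {H₁ H₂ : Type*} [NormedAddCommGroup H₁] [InnerProductSpace ℂ H₁] [CompleteSpace H₁]
    [NormedAddCommGroup H₂] [InnerProductSpace ℂ H₂] [CompleteSpace H₂]
    (M₁ : VonNeumannAlgebra H₁) (M₂ : VonNeumannAlgebra H₂) (Ω₁ : H₁) (Ω₂ : H₂)
    (hΩ₁ : ‖Ω₁‖ = 1) (hΩ₂ : ‖Ω₂‖ = 1)
    (hcyc₁ : IsCyclicVec (M₁ : Set (H₁ →L[ℂ] H₁)) Ω₁)
    (hsep₁ : IsSeparatingVec (M₁ : Set (H₁ →L[ℂ] H₁)) Ω₁)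
    (hcyc₂ : IsCyclicVec (M₂ : Set (H₂ →L[ℂ] H₂)) Ω₂)
    (hsep₂ : IsSeparatingVec (M₂ : Set (H₂ →L[ℂ] H₂)) Ω₂)
    (J₁ : ModularConjugation M₁ Ω₁) (J₂ : ModularConjugation M₂ Ω₂)
    (Φ : (H₁ →L[ℂ] H₁) →ₗ[ℂ] (H₂ →L[ℂ] H₂))
    (hmem : ∀ A ∈ M₁, Φ A ∈ M₂) (hunital : Φ 1 = 1)
    (hCP : IsCP (M₁ : Set (H₁ →L[ℂ] H₁)) Φ)
    (hstate : IsStatePreserving (M₁ : Set (H₁ →L[ℂ] H₁)) Ω₁ Ω₂ Φ)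
    (Φs : (H₂ →L[ℂ] H₂) →ₗ[ℂ] (H₁ →L[ℂ] H₁))
    (hmems : ∀ B ∈ M₂, Φs B ∈ M₁) (hunitals : Φs 1 = 1)
    (hCPs : IsCP (M₂ : Set (H₂ →L[ℂ] H₂)) Φs)
    (hstates : IsStatePreserving (M₂ : Set (H₂ →L[ℂ] H₂)) Ω₂ Ω₁ Φs)
    (hadj : ∀ A ∈ M₁, ∀ B ∈ M₂, ⟪Ω₂, B (Φ A Ω₂)⟫_ℂ = ⟪Ω₁, Φs B (A Ω₁)⟫_ℂ)
    (U : H₁ →L[ℂ] H₂) (hU : ∀ A ∈ M₁, U (A Ω₁) = Φ A Ω₂)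
    (hJU : ∀ x : H₁, J₂.J (U x) = U (J₁.J x))
    (L : Type*) [NormedAddCommGroup L] [InnerProductSpace ℂ L] [CompleteSpace L]
    (S : StinespringData (M₁ : Set (H₁ →L[ℂ] H₁)) Φ L)
    (τ : (H₂ →L[ℂ] H₂) → (L →L[ℂ] L))
    (hτ : ∀ Y ∈ M₂.commutant, ∀ A ∈ M₁, ∀ h : H₂, τ Y (S.emb A h) = S.emb A (Y h))
    (Λ : H₁ →L[ℂ] L) (hΛ : ∀ A ∈ M₁, Λ (A Ω₁) = S.emb A Ω₂) :
    ∀ Y ∈ M₂.commutant,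
      adjoint Λ ∘L τ Y ∘L Λ = J₁.conj (Φs (J₂.conj Y)) :=
  stmt10_general M₁ M₂ Ω₁ Ω₂ hcyc₁ J₁ J₂ Φ hCP Φs hmems hCPs hadj U hU hJU L S τ hτ Λ hΛ
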